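/- arXiv:2106.07707 — 2 statements merged into one kernel-verified Lean document; each statement's English description precedes it below -/
import Mathlib

section
/- Let ⟨A,∧,∨,→,∼,1⟩ be a Nelson algebra. Then for all x,y,z in A: x↣(y∧z) = (x↣y)∧(x↣z), where x↣y:=(x→y)∧(∼y→∼x). -/
/-!
Axioms (N1)–(N4) make `∧, ∨` a distributive lattice, with `1` on top by (N6)–(N7). In it `→` is
residuated in the Nelson sense, `u ≤ (x → s) ↔ x ∧ u ≤ (x ∧ ∼x) ∨ s`, where the Kleene law (N5)
supplies the case split between `x` and `∼x`. Comparing lower bounds then gives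
`x → (y ∧ z) = (x → y) ∧ (x → z)` and `(x ∨ y) → z = (x → z) ∧ (y → z)`; as
`∼(y ∧ z) = ∼y ∨ ∼z`, these two identities distribute `↣` over `∧`.
-/

/-- A Nelson algebra ⟨A,∧,∨,→,∼,1⟩ of type (2,2,2,1,0). -/
structure NelsonAlgebra (A : Type*) where
  meet : A → A → A
  join : A → A → A
  imp : A → A → A
  neg : A → A
  one : A
  n1 : ∀ x y, meet x (join x y) = x
  n2 : ∀ x y z, meet x (join y z) = join (meet z x) (meet y x)
  n3 : ∀ x, neg (neg x) = x
  n4 : ∀ x y, neg (meet x y) = join (neg x) (neg y)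
  n5 : ∀ x y, meet x (neg x) = meet (meet x (neg x)) (join y (neg y))
  n6 : ∀ x, imp x x = one
  n7 : ∀ x y, meet x (imp x y) = meet x (join (neg x) y)
  n8 : ∀ x y z, imp (meet x y) z = imp x (imp y z)

/-- The weak implication x↣y := (x→y)∧(∼y→∼x). -/
def NelsonAlgebra.wimp {A : Type*} (N : NelsonAlgebra A) (x y : A) : A :=
  N.meet (N.imp x y) (N.imp (N.neg y) (N.neg x))

/-- Axioms (N3)–(N8) of a Nelson algebra, over a given distributive lattice with top. -/
structure NelsonLattice (L : Type*) [DistribLattice L] [OrderTop L] where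
  imp : L → L → L
  neg : L → L
  neg_neg : ∀ x, neg (neg x) = x
  neg_inf : ∀ x y, neg (x ⊓ y) = neg x ⊔ neg y
  inf_neg_le_sup_neg : ∀ x y, x ⊓ neg x ≤ y ⊔ neg y
  imp_self : ∀ x, imp x x = ⊤
  inf_imp : ∀ x y, x ⊓ imp x y = x ⊓ (neg x ⊔ y)
  inf_imp_eq_imp_imp : ∀ x y z, imp (x ⊓ y) z = imp x (imp y z)

namespace NelsonLattice

variable {L : Type*} [DistribLattice L] [OrderTop L] (C : NelsonLattice L)

def wimp (x y : L) : L :=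
  C.imp x y ⊓ C.imp (C.neg y) (C.neg x)

theorem neg_sup (x y : L) : C.neg (x ⊔ y) = C.neg x ⊓ C.neg y := by
  rw [← C.neg_neg (C.neg x ⊓ C.neg y), C.neg_inf, C.neg_neg, C.neg_neg]

theorem neg_le_neg {x y : L} (h : x ≤ y) : C.neg y ≤ C.neg x := by
  rw [← sup_eq_right.2 h, C.neg_sup]
  exact inf_le_left

theorem le_of_inf_le_of_inf_neg_le {u w t : L} (c : L) (hw : w ≤ u ⊓ C.neg u)
    (hc : w ⊓ c ≤ t) (hnc : w ⊓ C.neg c ≤ t) : w ≤ t := by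
  rw [← inf_eq_left.2 (hw.trans (C.inf_neg_le_sup_neg u c)), inf_sup_left]
  exact sup_le hc hnc

theorem imp_eq_top_of_le {x y : L} (h : x ≤ C.neg x ⊔ y) : C.imp x y = ⊤ := by
  have hx : x ⊓ C.imp x y = x := by rw [C.inf_imp]; exact inf_eq_left.2 h
  calc C.imp x y = C.imp (C.imp x y ⊓ x) y := by rw [inf_comm, hx]
    _ = ⊤ := by rw [C.inf_imp_eq_imp_imp, C.imp_self]

theorem le_of_imp_eq_top {x y : L} (h : C.imp x y = ⊤) (hk : x ⊓ C.neg x ≤ y) : x ≤ y := by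
  have hx : x ⊓ (C.neg x ⊔ y) = x := by rw [← C.inf_imp, h, inf_top_eq]
  calc x = x ⊓ C.neg x ⊔ x ⊓ y := by rw [← inf_sup_left, hx]
    _ ≤ y := sup_le hk inf_le_right

theorem neg_sup_le_imp (x y : L) : C.neg x ⊔ y ≤ C.imp x y := by
  set u := C.neg x ⊔ y
  have hnu : C.neg u = x ⊓ C.neg y := by rw [C.neg_sup, C.neg_neg]
  apply C.le_of_imp_eq_top
  · rw [← C.inf_imp_eq_imp_imp]
    apply C.imp_eq_top_of_le
    rw [C.neg_inf]
    exact inf_le_left.trans (sup_le_sup_right le_sup_right y)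
  · calc u ⊓ C.neg u ≤ x ⊓ (C.neg x ⊔ y) :=
          le_inf (hnu ▸ inf_le_right.trans inf_le_left) inf_le_left
      _ = x ⊓ C.imp x y := (C.inf_imp x y).symm
      _ ≤ C.imp x y := inf_le_right

theorem le_imp_iff {x u s : L} : u ≤ C.imp x s ↔ x ⊓ u ≤ x ⊓ C.neg x ⊔ s := by
  constructor
  · intro h
    calc x ⊓ u ≤ x ⊓ (C.neg x ⊔ s) := C.inf_imp x s ▸ inf_le_inf_left x h
      _ = x ⊓ C.neg x ⊔ x ⊓ s := inf_sup_left _ _ _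
      _ ≤ x ⊓ C.neg x ⊔ s := sup_le_sup_left inf_le_right _
  · intro h
    have hs : x ⊓ C.neg x ⊔ s ≤ C.imp x s :=
      (sup_le_sup_right inf_le_right s).trans (C.neg_sup_le_imp x s)
    apply C.le_of_imp_eq_top
    · rw [← C.inf_imp_eq_imp_imp]
      apply C.imp_eq_top_of_le
      rw [inf_comm, C.neg_inf]
      exact h.trans (sup_le_sup_right (inf_le_right.trans le_sup_left) s)
    · apply C.le_of_inf_le_of_inf_neg_le x le_rfl
      · exact (le_inf inf_le_right (inf_le_left.trans inf_le_left)).trans (h.trans hs)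
      · exact inf_le_right.trans (le_sup_left.trans (C.neg_sup_le_imp x s))

theorem imp_inf (x y z : L) : C.imp x (y ⊓ z) = C.imp x y ⊓ C.imp x z :=
  eq_of_forall_le_iff fun u => by simp only [le_inf_iff, C.le_imp_iff, sup_inf_left]

theorem imp_le_imp_right {x x' : L} (h : x ≤ x') (z : L) : C.imp x' z ≤ C.imp x z := by
  rw [C.le_imp_iff]
  calc x ⊓ C.imp x' z = x ⊓ (x' ⊓ (C.neg x' ⊔ z)) := by
        rw [← C.inf_imp, ← inf_assoc, inf_eq_left.2 h]
    _ ≤ x ⊓ (C.neg x ⊔ z) :=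
        inf_le_inf_left x (inf_le_right.trans (sup_le_sup_right (C.neg_le_neg h) z))
    _ = x ⊓ C.neg x ⊔ x ⊓ z := inf_sup_left _ _ _
    _ ≤ x ⊓ C.neg x ⊔ z := sup_le_sup_left inf_le_right _

theorem inf_le_of_le_imp_of_le_imp {x y z u : L} (hx : u ≤ C.imp x z) (hy : u ≤ C.imp y z) :
    x ⊓ u ≤ (x ⊔ y) ⊓ C.neg (x ⊔ y) ⊔ z := by
  have hxy : x ⊓ C.neg x ⊓ C.neg y ≤ (x ⊔ y) ⊓ C.neg (x ⊔ y) := by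
    rw [C.neg_sup, inf_assoc]
    exact inf_le_inf_right _ le_sup_left
  have hy' := C.le_imp_iff.1 hy
  have hxu : x ⊓ u ≤ x ⊓ C.neg x ⊓ u ⊔ z :=
    calc x ⊓ u ≤ (x ⊓ C.neg x ⊔ z) ⊓ u := le_inf (C.le_imp_iff.1 hx) inf_le_right
      _ = x ⊓ C.neg x ⊓ u ⊔ z ⊓ u := inf_sup_right _ _ _
      _ ≤ x ⊓ C.neg x ⊓ u ⊔ z := sup_le_sup_left inf_le_left _
  refine hxu.trans (sup_le ?_ le_sup_right)
  apply C.le_of_inf_le_of_inf_neg_le y inf_le_left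
  · calc x ⊓ C.neg x ⊓ u ⊓ y = x ⊓ C.neg x ⊓ (y ⊓ u) := by rw [inf_assoc, inf_comm u]
      _ ≤ x ⊓ C.neg x ⊓ (y ⊓ C.neg y ⊔ z) := inf_le_inf_left _ hy'
      _ = x ⊓ C.neg x ⊓ (y ⊓ C.neg y) ⊔ x ⊓ C.neg x ⊓ z := inf_sup_left _ _ _
      _ ≤ (x ⊔ y) ⊓ C.neg (x ⊔ y) ⊔ z :=
          sup_le_sup (hxy.trans' (inf_le_inf_left _ inf_le_right)) inf_le_right
  · exact (inf_le_inf_right _ inf_le_left).trans (hxy.trans le_sup_left)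

theorem sup_imp (x y z : L) : C.imp (x ⊔ y) z = C.imp x z ⊓ C.imp y z := by
  refine le_antisymm
    (le_inf (C.imp_le_imp_right le_sup_left z) (C.imp_le_imp_right le_sup_right z)) ?_
  rw [C.le_imp_iff, inf_sup_right]
  refine sup_le (C.inf_le_of_le_imp_of_le_imp inf_le_left inf_le_right) ?_
  rw [sup_comm x y]
  exact C.inf_le_of_le_imp_of_le_imp inf_le_right inf_le_left

theorem wimp_inf (x y z : L) : C.wimp x (y ⊓ z) = C.wimp x y ⊓ C.wimp x z := by
  rw [wimp, wimp, wimp, C.imp_inf, C.neg_inf, C.sup_imp, inf_inf_inf_comm]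

end NelsonLattice

namespace NelsonAlgebra

variable {A : Type*} (N : NelsonAlgebra A)

theorem meet_self (x : A) : N.meet x x = x := by
  calc N.meet x x = N.meet x (N.neg (N.meet (N.neg x) (N.join (N.neg x) x))) := by
        rw [N.n1, N.n3]
    _ = x := by rw [N.n4, N.n3, N.n1]

theorem neg_join (x y : A) : N.neg (N.join x y) = N.meet (N.neg x) (N.neg y) := by
  rw [← N.n3 (N.meet (N.neg x) (N.neg y)), N.n4, N.n3, N.n3]

theorem join_self (x : A) : N.join x x = x := by
  rw [← N.n3 (N.join x x), neg_join, meet_self, N.n3]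

theorem join_meet_self' (x y : A) : N.join (N.meet y x) x = x :=
  calc N.join (N.meet y x) x = N.join (N.meet y x) (N.meet x x) := by rw [meet_self]
    _ = x := by rw [← N.n2, N.n1]

theorem meet_comm (x y : A) : N.meet x y = N.meet y x := by
  rw [← join_self N (N.meet x y), ← N.n2, join_self]

theorem join_comm (x y : A) : N.join x y = N.join y x := by
  rw [← N.n3 (N.join x y), neg_join, meet_comm, ← neg_join, N.n3]

theorem meet_join_self' (x y : A) : N.meet x (N.join y x) = x := by
  rw [join_comm, N.n1]

theorem join_meet_self (x y : A) : N.join x (N.meet x y) = x := by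
  rw [meet_comm, join_comm, join_meet_self']

theorem meet_join_left (x y z : A) :
    N.meet x (N.join y z) = N.join (N.meet x y) (N.meet x z) := by
  rw [join_comm N y z, N.n2, meet_comm N y, meet_comm N z]

theorem meet_one (x : A) : N.meet x N.one = x := by
  rw [← N.n6 x, N.n7, meet_join_left, meet_self, meet_comm N x, join_meet_self']

theorem meet_join_eq_of_meet_eq {w x y : A} (hx : N.meet x w = x) (hy : N.meet y w = y) :
    N.meet w (N.join x y) = N.join x y := by
  rw [meet_join_left, meet_comm N w x, hx, meet_comm N w y, hy]

theorem join_assoc (x y z : A) : N.join (N.join x y) z = N.join x (N.join y z) := by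
  set l := N.join (N.join x y) z
  set r := N.join x (N.join y z)
  have hxl : N.meet x l = x := by rw [meet_join_left, N.n1, join_meet_self]
  have hyl : N.meet y l = y := by rw [meet_join_left, meet_join_self', join_meet_self]
  have hzl : N.meet z l = z := meet_join_self' N z _
  have hxr : N.meet x r = x := N.n1 x _
  have hyr : N.meet y r = y := by rw [meet_join_left, N.n1, meet_comm, join_meet_self']
  have hzr : N.meet z r = z := by rw [meet_join_left, meet_join_self', meet_comm, join_meet_self']
  have hlr : N.meet l r = r := by
    refine N.meet_join_eq_of_meet_eq hxl ?_
    rw [meet_comm]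
    exact N.meet_join_eq_of_meet_eq hyl hzl
  have hrl : N.meet r l = l := by
    refine N.meet_join_eq_of_meet_eq ?_ hzr
    rw [meet_comm]
    exact N.meet_join_eq_of_meet_eq hxr hyr
  rw [← hrl, meet_comm, hlr]

theorem meet_assoc (x y z : A) : N.meet (N.meet x y) z = N.meet x (N.meet y z) := by
  rw [← N.n3 (N.meet (N.meet x y) z), N.n4, N.n4, join_assoc, ← N.n4, ← N.n4, N.n3]

def AsLattice (_ : NelsonAlgebra A) : Type _ := A

instance : Min N.AsLattice := ⟨N.meet⟩

instance : Max N.AsLattice := ⟨N.join⟩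

instance : Lattice N.AsLattice :=
  Lattice.mk' (join_comm N) (join_assoc N) (meet_comm N) (meet_assoc N) (join_meet_self N) N.n1

instance : DistribLattice N.AsLattice :=
  DistribLattice.ofInfSupLe fun x y z => le_of_eq (meet_join_left N x y z)

instance : OrderTop N.AsLattice where
  top := N.one
  le_top x := inf_eq_left.1 (meet_one N x)

def toNelsonLattice : NelsonLattice N.AsLattice where
  imp := N.imp
  neg := N.neg
  neg_neg := N.n3
  neg_inf := N.n4
  inf_neg_le_sup_neg x y := inf_eq_left.1 (N.n5 x y).symm
  imp_self := N.n6
  inf_imp := N.n7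
  inf_imp_eq_imp_imp := N.n8

end NelsonAlgebra

theorem nelson_wimp_meet_distrib {A : Type*} (N : NelsonAlgebra A) (x y z : A) :
    N.wimp x (N.meet y z) = N.meet (N.wimp x y) (N.wimp x z) :=
  N.toNelsonLattice.wimp_inf x y z
end

section
/- Let ⟨A,∧,↣,0⟩ be a Brignole algebra. Define x∨y:=((x↣0)∧(y↣0))↣0, x→y:=x↣(x↣y), ∼x:=x↣0 and 1:=0↣0. Then ⟨A,∧,∨,→,∼,1⟩ is a Nelson algebra, i.e., it satisfies the eight identities (N1)–(N8): (N1) x∧(x∨y)=x; (N2) x∧(y∨z)=(z∧x)∨(y∧x); (N3) ∼∼x=x; (N4) ∼(x∧y)=∼x∨∼y; (N5) x∧∼x=(x∧∼x)∧(y∨∼y); (N6) x→x=1; (N7) x∧(x→y)=x∧(∼x∨y); (N8) (x∧y)→z=x→(y→z). -/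
/-- A Brignole algebra ⟨A,∧,↣,0⟩ of type (2,2,0), with the abbreviations
∼x := x↣0 and x∨y := ((x↣0)∧(y↣0))↣0 written out in the axioms. -/
structure BrignoleAlgebra (A : Type*) where
  meet : A → A → A
  himp : A → A → A
  zero : A
  b1 : ∀ x y, himp (himp x x) y = y
  b2 : ∀ x y, meet (himp x y) y = y
  b3 : ∀ x y, meet x (himp (meet x (himp y zero)) zero) = meet x (himp x y)
  b4 : ∀ x y z, himp x (meet y z) = meet (himp x y) (himp x z)
  b5 : ∀ x y, himp x y = himp (himp y zero) (himp x zero)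
  b6 : ∀ x y z, himp x (himp x (himp y (himp y z))) =
    himp (meet x y) (himp (meet x y) z)
  b7 : ∀ x y, himp (himp (meet (himp x zero) y) zero) (himp x y) = himp x y
  b8 : ∀ x y, meet x (himp (meet (himp x zero) (himp y zero)) zero) = x
  b9 : ∀ x y z, meet x (himp (meet (himp y zero) (himp z zero)) zero) =
    himp (meet (himp (meet z x) zero) (himp (meet y x) zero)) zero
  b10 : ∀ x y, meet (meet x (himp x zero))
      (himp (meet (himp y zero) (himp (himp y zero) zero)) zero) =
    meet x (himp x zero)

/-- The negation ∼x := x↣0. -/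
def BrignoleAlgebra.neg {A : Type*} (B : BrignoleAlgebra A) (x : A) : A :=
  B.himp x B.zero

/-- The join x∨y := ((x↣0)∧(y↣0))↣0. -/
def BrignoleAlgebra.join {A : Type*} (B : BrignoleAlgebra A) (x y : A) : A :=
  B.himp (B.meet (B.himp x B.zero) (B.himp y B.zero)) B.zero

/-- The strong implication x→y := x↣(x↣y). -/
def BrignoleAlgebra.imp {A : Type*} (B : BrignoleAlgebra A) (x y : A) : A :=
  B.himp x (B.himp x y)

/-- The unit 1 := 0↣0. -/
def BrignoleAlgebra.one {A : Type*} (B : BrignoleAlgebra A) : A :=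
  B.himp B.zero B.zero

/-! The axioms (B1) and (B5) make `1 = 0↣0` a left unit for `↣` and let `↣` contrapose, which
forces `∼` to be an involution; hence `∨` is the De Morgan dual of `∧`. Together with the
distributive law (B9) this makes `∧` idempotent and commutative, and (N7) then follows from (B3)
read twice: `x ∧ (x ↣ w) = (x ∧ w) ∨ (∼x ∧ x)`. The remaining identities are axioms. -/

namespace BrignoleAlgebra

variable {A : Type*} (B : BrignoleAlgebra A)

theorem join_def (x y : A) : B.join x y = B.neg (B.meet (B.neg x) (B.neg y)) := rfl

theorem neg_zero : B.neg B.zero = B.one := rfl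

theorem meet_join_self (x y : A) : B.meet x (B.join x y) = x := B.b8 x y

theorem meet_join (x y z : A) : B.meet x (B.join y z) = B.join (B.meet z x) (B.meet y x) :=
  B.b9 x y z

theorem one_himp (y : A) : B.himp B.one y = y := B.b1 B.zero y

theorem eq_himp_neg_one (y : A) : y = B.himp (B.neg y) (B.neg B.one) :=
  (B.one_himp y).symm.trans (B.b5 _ _)

theorem neg_one : B.neg B.one = B.zero := by
  conv_rhs => rw [eq_himp_neg_one B B.zero]
  exact (B.one_himp _).symm

theorem neg_neg (x : A) : B.neg (B.neg x) = x := by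
  conv_rhs => rw [eq_himp_neg_one B x, neg_one]
  rfl

theorem neg_meet (x y : A) : B.neg (B.meet x y) = B.join (B.neg x) (B.neg y) := by
  rw [join_def, neg_neg, neg_neg]

theorem neg_join (x y : A) : B.neg (B.join x y) = B.meet (B.neg x) (B.neg y) := by
  rw [join_def, neg_neg]

theorem himp_self (x : A) : B.himp x x = B.one := by
  rw [← B.neg_neg (B.himp x x)]
  exact congrArg B.neg (B.b1 x B.zero)

theorem meet_self (x : A) : B.meet x x = x := by
  simpa only [B.b1] using B.b2 (B.himp x x) x

theorem join_self (x : A) : B.join x x = x := by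
  rw [join_def, meet_self, neg_neg]

theorem meet_comm (x y : A) : B.meet x y = B.meet y x := by
  simpa only [join_self] using B.meet_join x y y

theorem join_comm (x y : A) : B.join x y = B.join y x := by
  rw [join_def, join_def, meet_comm]

theorem meet_zero (x : A) : B.meet x B.zero = B.zero := by
  rw [← B.neg_neg x]
  exact B.b2 _ _

theorem meet_one (x : A) : B.meet x B.one = x := by
  simpa only [join_def, neg_one, meet_zero, neg_zero] using B.meet_join_self x B.one

theorem himp_one (x : A) : B.himp x B.one = B.one := by
  simpa only [meet_one] using B.b2 x B.one

theorem join_eq_left_of_meet_eq {x y : A} (h : B.meet y x = y) : B.join x y = x := by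
  have hneg : B.meet (B.neg x) (B.neg y) = B.neg x := by
    rw [← h, neg_meet, join_comm]
    exact B.meet_join_self (B.neg x) (B.neg y)
  rw [← B.neg_neg (B.join x y), neg_join, hneg, neg_neg]

theorem join_right_idem (x y : A) : B.join (B.join x y) y = B.join x y :=
  B.join_eq_left_of_meet_eq (by rw [join_comm]; exact B.meet_join_self y x)

theorem meet_himp (x y : A) : B.meet x (B.himp x y) = B.meet x (B.join (B.neg x) y) := by
  rw [join_def, neg_neg]
  exact (B.b3 x y).symm

theorem meet_join_neg (x y : A) :
    B.meet x (B.join (B.neg x) y) = B.join (B.meet x y) (B.meet (B.neg x) x) := by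
  rw [meet_join, meet_comm B y]

theorem imp_self (x : A) : B.imp x x = B.one := by
  rw [imp, himp_self, himp_one]

theorem meet_imp (x y : A) : B.meet x (B.imp x y) = B.meet x (B.join (B.neg x) y) :=
  calc B.meet x (B.himp x (B.himp x y))
      = B.join (B.meet x (B.himp x y)) (B.meet (B.neg x) x) := by
        rw [meet_himp, meet_join_neg]
    _ = B.join (B.join (B.meet x y) (B.meet (B.neg x) x)) (B.meet (B.neg x) x) := by
        rw [meet_himp, meet_join_neg]
    _ = B.meet x (B.join (B.neg x) y) := by
        rw [join_right_idem, meet_join_neg]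

end BrignoleAlgebra

/-- A Brignole algebra, with x∨y := ((x↣0)∧(y↣0))↣0, x→y := x↣(x↣y), ∼x := x↣0
and 1 := 0↣0, is a Nelson algebra: the identities (N1)–(N8) hold. -/
theorem brignole_to_nelson {A : Type*} (B : BrignoleAlgebra A) :
    (∀ x y, B.meet x (B.join x y) = x) ∧
    (∀ x y z, B.meet x (B.join y z) = B.join (B.meet z x) (B.meet y x)) ∧
    (∀ x, B.neg (B.neg x) = x) ∧
    (∀ x y, B.neg (B.meet x y) = B.join (B.neg x) (B.neg y)) ∧
    (∀ x y, B.meet x (B.neg x) =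
      B.meet (B.meet x (B.neg x)) (B.join y (B.neg y))) ∧
    (∀ x, B.imp x x = B.one) ∧
    (∀ x y, B.meet x (B.imp x y) = B.meet x (B.join (B.neg x) y)) ∧
    (∀ x y z, B.imp (B.meet x y) z = B.imp x (B.imp y z)) :=
  ⟨B.meet_join_self, B.meet_join, B.neg_neg, B.neg_meet, fun x y => (B.b10 x y).symm,
    B.imp_self, B.meet_imp, fun x y z => (B.b6 x y z).symm⟩
end
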